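/- Let R = ℤ[H]/(H^{n+1}) with tensor operation T_m as above. Then for any r ≥ 1, integers e_1, …, e_r, m, and any α ∈ R, T_m(Π_{j=1}^{r}(1+e_j H)·α) = Π_{j=1}^{r}(1+(e_j+m)H) · (1+mH)^{-r} · T_m(α). -/

import Mathlib

open PowerSeries

/-- The tensor operation `T_m` on the model `ℤ[H]/(H^(n+1)) ⊆ ℚ[[H]]`:
`T_m (Σ a_i H^i) = Σ_{i=0}^n a_i H^i (1+mH)^{-i}`, with graded components
extracted from the input via `coeff`. Equality in the quotient ring is
expressed as equality of coefficients in degrees `≤ n`. -/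
noncomputable def T (n : ℕ) (m : ℤ) (f : PowerSeries ℚ) : PowerSeries ℚ :=
  ∑ i ∈ Finset.range (n + 1),
    PowerSeries.C ((PowerSeries.coeff i) f) * PowerSeries.X ^ i *
      ((1 + PowerSeries.C (m : ℚ) * PowerSeries.X)⁻¹) ^ i

/-- The dual operation `D (Σ a_i H^i) = Σ (-1)^i a_i H^i`. -/
noncomputable def D (f : PowerSeries ℚ) : PowerSeries ℚ :=
  PowerSeries.mk fun i => (-1) ^ i * (PowerSeries.coeff i) f

/-!
Modulo `H^(n+1)`, `T n m f` is the image of `f` under the substitution `H ↦ H / (1 + mH)`: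
`T n m` substitutes into the truncation of `f`, and substitution changes the discarded
tail `H^(n+1) g` only by a multiple of `H^(n+1)`. Substitution is a ring homomorphism, and it
sends `1 + eH` to `1 + eH/(1 + mH) = (1 + (e + m)H)/(1 + mH)`.
-/

namespace PowerSeries

theorem X_pow_dvd_subst_sub_subst_trunc {R : Type*} [CommRing R] {a : R⟦X⟧}
    (ha : constantCoeff a = 0) (n : ℕ) (f : R⟦X⟧) :
    X ^ n ∣ f.subst a - (trunc n f : R⟦X⟧).subst a := by
  have hsubst : HasSubst a := .of_constantCoeff_zero' ha
  have hX : (X : R⟦X⟧) ^ n ∣ a ^ n := pow_dvd_pow_of_dvd (X_dvd_iff.mpr ha) n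
  nth_rewrite 1 [eq_X_pow_mul_shift_add_trunc n f]
  rw [subst_add hsubst, subst_mul hsubst, subst_pow hsubst, subst_X hsubst, add_sub_cancel_right]
  exact dvd_mul_of_dvd_left hX _

theorem hasSubst_X_mul {R : Type*} [CommRing R] (g : R⟦X⟧) : HasSubst (X * g) :=
  HasSubst.X'.mul_left

section Field

variable {k : Type*} [Field k]

theorem subst_X_mul_inv_one_add_C_mul_X (c d : k) :
    (1 + C d * X).subst (X * (1 + C c * X)⁻¹) = (1 + C (d + c) * X) * (1 + C c * X)⁻¹ := by
  have hsubst := hasSubst_X_mul (1 + C c * X)⁻¹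
  have hC : substAlgHom hsubst (C d) = C d := (substAlgHom hsubst).commutes d
  rw [← coe_substAlgHom hsubst, map_add, map_one, map_mul, substAlgHom_X, hC]
  calc _ = (1 + C c * X) * (1 + C c * X)⁻¹ + C d * (X * (1 + C c * X)⁻¹) := by
          rw [PowerSeries.mul_inv_cancel _ (by simp)]
    _ = _ := by rw [map_add]; ring

theorem subst_X_mul_inv_prod_one_add_C_mul_X {ι : Type*} (s : Finset ι) (c : k) (d : ι → k) :
    (∏ j ∈ s, (1 + C (d j) * X)).subst (X * (1 + C c * X)⁻¹) =
      (∏ j ∈ s, (1 + C (d j + c) * X)) * (1 + C c * X)⁻¹ ^ s.card := by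
  rw [← coe_substAlgHom (hasSubst_X_mul _), map_prod]
  simp_rw [coe_substAlgHom, subst_X_mul_inv_one_add_C_mul_X, Finset.prod_mul_distrib,
    Finset.prod_const]

end Field

end PowerSeries

open PowerSeries

theorem T_eq_subst_trunc (n : ℕ) (m : ℤ) (f : ℚ⟦X⟧) :
    T n m f = (trunc (n + 1) f : ℚ⟦X⟧).subst (X * (1 + C (m : ℚ) * X)⁻¹) := by
  rw [subst_coe (hasSubst_X_mul _), Polynomial.aeval_def, eval₂_trunc_eq_sum_range, T]
  refine Finset.sum_congr rfl fun i _ => ?_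
  rw [mul_pow, ← mul_assoc]
  rfl

theorem X_pow_dvd_subst_sub_T (n : ℕ) (m : ℤ) (f : ℚ⟦X⟧) :
    X ^ (n + 1) ∣ f.subst (X * (1 + C (m : ℚ) * X)⁻¹) - T n m f := by
  rw [T_eq_subst_trunc]
  exact X_pow_dvd_subst_sub_subst_trunc (by simp) (n + 1) f

theorem tensor_split_bundle_general (n : ℕ) (r : ℕ) (e : ℕ → ℤ) (m : ℤ)
    (α : PowerSeries ℚ) :
    ∀ k ≤ n, (PowerSeries.coeff k)
        (T n m ((∏ j ∈ Finset.range r,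
          (1 + PowerSeries.C (e j : ℚ) * PowerSeries.X)) * α)) =
      (PowerSeries.coeff k)
        ((∏ j ∈ Finset.range r,
            (1 + PowerSeries.C ((e j + m : ℤ) : ℚ) * PowerSeries.X)) *
          ((1 + PowerSeries.C (m : ℚ) * PowerSeries.X)⁻¹) ^ r * T n m α) := by
  intro k hk
  set u := (1 + C (m : ℚ) * X)⁻¹
  set P := ∏ j ∈ Finset.range r, (1 + C (e j : ℚ) * X)
  set Q := ∏ j ∈ Finset.range r, (1 + C ((e j + m : ℤ) : ℚ) * X)
  have hP : P.subst (X * u) = Q * u ^ r := by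
    rw [subst_X_mul_inv_prod_one_add_C_mul_X, Finset.card_range]
    simp only [Q, u, Int.cast_add]
  have hsplit : T n m (P * α) - Q * u ^ r * T n m α =
      Q * u ^ r * (α.subst (X * u) - T n m α) - ((P * α).subst (X * u) - T n m (P * α)) := by
    rw [subst_mul (hasSubst_X_mul u), hP]
    ring
  have hdvd : X ^ (n + 1) ∣ T n m (P * α) - Q * u ^ r * T n m α := by
    rw [hsplit]
    exact dvd_sub (dvd_mul_of_dvd_right (X_pow_dvd_subst_sub_T n m α) _)
      (X_pow_dvd_subst_sub_T n m (P * α))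
  rw [← sub_eq_zero, ← map_sub]
  exact X_pow_dvd_iff.mp hdvd k (Nat.lt_succ_of_le hk)

/-- Aluffi's formula `(c(𝔈) ∩ α) ⊗ 𝔏 = c(𝔈⊗𝔏) c(𝔏)^{-r} ∩ (α ⊗ 𝔏)` for a split
bundle of rank `r`: `T_m (Π_{j=1}^r (1+e_j H) · α) = Π (1+(e_j+m)H) · (1+mH)^{-r} · T_m α`. -/
theorem tensor_split_bundle (n : ℕ) (r : ℕ) (hr : 1 ≤ r) (e : ℕ → ℤ) (m : ℤ)
    (α : PowerSeries ℚ) :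
    ∀ k ≤ n, (PowerSeries.coeff k)
        (T n m ((∏ j ∈ Finset.range r,
          (1 + PowerSeries.C (e j : ℚ) * PowerSeries.X)) * α)) =
      (PowerSeries.coeff k)
        ((∏ j ∈ Finset.range r,
            (1 + PowerSeries.C ((e j + m : ℤ) : ℚ) * PowerSeries.X)) *
          ((1 + PowerSeries.C (m : ℚ) * PowerSeries.X)⁻¹) ^ r * T n m α) :=
  tensor_split_bundle_general n r e m α
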